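/- In speculative decoding with residual resampling, each output token follows the target distribution: if a draft token x is sampled from q and accepted with probability min(1, p(x)/q(x)), and on rejection a token is sampled from the normalized residual distribution norm(max(0, p - q)), then the resulting token is distributed according to p. -/
import Mathlib


/-- Correctness of speculative sampling with residual resampling: if a draft token `x` is
sampled from `q` and accepted with probability `min(1, p(x)/q(x))`, and on rejection a
token is sampled from the normalized residual distribution `norm(max(0, p - q))`, then
the resulting token is distributed according to `p`. -/
theorem speculative_sampling_exact {V : Type*} [Fintype V]
    (p q : V → ℝ)
    (hp0 : ∀ x, 0 ≤ p x) (hp1 : ∑ x, p x = 1)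
    (hq0 : ∀ x, 0 ≤ q x) (hq1 : ∑ x, q x = 1)
    (hZ : 0 < ∑ x, max 0 (p x - q x)) :
    ∀ x : V,
      q x * min 1 (p x / q x) +
        (∑ y, q y * (1 - min 1 (p y / q y))) *
          (max 0 (p x - q x) / ∑ y, max 0 (p y - q y)) = p x := by
  have key : ∀ x, q x * min 1 (p x / q x) = min (q x) (p x) := by
    intro x
    rcases eq_or_lt_of_le (hq0 x) with h | h
    · simp [← h, min_eq_left (hp0 x)]
    · rcases le_total (p x) (q x) with hle | hle
      · rw [min_eq_right (by rw [div_le_one h]; exact hle),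
          mul_div_cancel₀ _ (ne_of_gt h), min_eq_right hle]
      · rw [min_eq_left (by rw [le_div_iff₀ h]; simpa using hle), mul_one,
          min_eq_left hle]
  have keymax : ∀ x, max 0 (p x - q x) = p x - min (q x) (p x) := by
    intro x
    rcases le_total (p x) (q x) with hle | hle
    · rw [max_eq_left (by linarith), min_eq_right hle]; ring
    · rw [max_eq_right (by linarith), min_eq_left hle]
  have hsum : (∑ y, q y * (1 - min 1 (p y / q y))) = ∑ y, max 0 (p y - q y) := by
    rw [Finset.sum_congr rfl (fun y _ => by rw [mul_sub, mul_one, key y]),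
      Finset.sum_sub_distrib, hq1,
      Finset.sum_congr rfl (fun y (_ : y ∈ Finset.univ) => keymax y),
      Finset.sum_sub_distrib, hp1]
  intro x
  rw [key, keymax, hsum, mul_comm, div_mul_cancel₀ _ (ne_of_gt hZ)]
  ring
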